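/- (Berger–Wang theorem for isometries) Let X be a δ-hyperbolic metric space and Σ a bounded set of isometries of X. Then D(Σ) = limsup_{n→∞} d∞(Σⁿ)/n = lim_{n→∞} d∞(Σ^{2n})/(2n), where D(Σ) is the joint stable length and d∞(Σⁿ) = sup_{f ∈ Σⁿ} d∞(f). -/

import Mathlib

open Filter Topology Function

/-- The set `Sⁿ` of all compositions of `n` elements of `S`. -/
def powSet {X : Type*} (S : Set (X → X)) (n : ℕ) : Set (X → X) :=
  {g | ∃ l : List (X → X), l.length = n ∧ (∀ f ∈ l, f ∈ S) ∧ g = l.foldr (· ∘ ·) id}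

/-- The joint displacement `|S|ₓ = sup_{f ∈ S} d(fx, x)`. -/
noncomputable def dispSup {X : Type*} [MetricSpace X] (x : X) (S : Set (X → X)) : ℝ :=
  sSup ((fun f => dist (f x) x) '' S)

/-- The stable length `d∞(f) = inf_{n ≥ 1} d(fⁿx, x)/n`
(which equals `lim_n d(fⁿx, x)/n` by Fekete's lemma). -/
noncomputable def stableLen {X : Type*} [MetricSpace X] (f : X → X) (x : X) : ℝ :=
  ⨅ n : ℕ, dist (f^[n + 1] x) x / (n + 1)

/-- `d∞(S) = sup_{f ∈ S} d∞(f)`. -/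
noncomputable def dInfty {X : Type*} [MetricSpace X] (S : Set (X → X)) (x : X) : ℝ :=
  sSup ((fun f => stableLen f x) '' S)

/-! Once `d(g²x, x) - d(gx, x) > 2δ`, the four point condition applied to `gx, gⁿ⁺²x, x, g²x`
keeps every increment `d(gⁿ⁺¹x, x) - d(gⁿx, x)` at least `d(g²x, x) - d(gx, x) - 2δ`, so
`d(g²x, x) - d(gx, x) - 2δ ≤ d∞(g)` for every isometry `g`. Feeding this into the four point
condition for the orbit points of `a` and `b`, split according to whether `d(abx, x)` is much
smaller than `d(bax, x)`, bounds `d(bax, x)` by `max(d(ax, x), d(bx, x)) + max(d∞(ba)/2, d∞(a),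
d∞(b)) + 6δ`. For `a, b ∈ Σⁿ`, using `2 d∞(a) ≤ d∞(a²)`, this is the key inequality
`|Σ²ⁿ|ₓ ≤ |Σⁿ|ₓ + d∞(Σ²ⁿ)/2 + 6δ`. By Fekete's lemma `2nD ≤ |Σ²ⁿ|ₓ`, so `d∞(Σ²ⁿ)/(2n)` lies
between `2D - |Σⁿ|ₓ/n - 6δ/n` and `|Σ²ⁿ|ₓ/(2n)`, which both tend to `D`; the limsup follows
from `d∞(Σⁿ) ≤ |Σⁿ|ₓ`. -/

def FourPointCondition (X : Type*) [MetricSpace X] (δ : ℝ) : Prop :=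
  ∀ x y s t : X, dist x y + dist s t ≤ max (dist x s + dist y t) (dist x t + dist y s) + 2 * δ

namespace FourPointCondition

variable {X : Type*} [MetricSpace X] {δ : ℝ} (h : FourPointCondition X δ)
include h

theorem nonneg (x : X) : 0 ≤ δ := by
  have := h x x x x
  simp only [dist_self, add_zero, max_self] at this
  linarith

theorem le_or_le (x y s t : X) :
    dist x y + dist s t ≤ dist x s + dist y t + 2 * δ ∨
      dist x y + dist s t ≤ dist x t + dist y s + 2 * δ := by
  simpa only [← max_add_add_right, le_max_iff] using h x y s t

end FourPointCondition

section StableLength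

variable {X : Type*} [MetricSpace X]

theorem stableLen_nonneg (f : X → X) (x : X) : 0 ≤ stableLen f x :=
  le_ciInf fun _ => by positivity

theorem stableLen_le_div (f : X → X) (x : X) (n : ℕ) :
    stableLen f x ≤ dist (f^[n + 1] x) x / (n + 1) :=
  ciInf_le ⟨0, by rintro _ ⟨k, rfl⟩; positivity⟩ n

theorem stableLen_le_dist (f : X → X) (x : X) : stableLen f x ≤ dist (f x) x := by
  simpa using stableLen_le_div f x 0

theorem le_stableLen {f : X → X} {x : X} {c : ℝ}
    (h : ∀ n : ℕ, (n + 1) * c ≤ dist (f^[n + 1] x) x) : c ≤ stableLen f x :=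
  le_ciInf fun n => (le_div_iff₀ (by positivity)).2 (by linarith [h n])

theorem two_mul_stableLen_le (f : X → X) (x : X) : 2 * stableLen f x ≤ stableLen (f ∘ f) x := by
  refine le_ciInf fun n => ?_
  have h := stableLen_le_div f x (2 * n + 1)
  rw [show f ∘ f = f^[2] from rfl, ← iterate_mul, show 2 * (n + 1) = 2 * n + 1 + 1 by ring]
  push_cast at h ⊢
  rw [show (2 * n + 1 + 1 : ℝ) = (n + 1) * 2 by ring, ← div_div, le_div_iff₀ two_pos] at h
  linarith

end StableLength

section Orbit

variable {X : Type*} [MetricSpace X] {δ : ℝ} {g : X → X}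

theorem FourPointCondition.dist_iterate_le_or_le (h : FourPointCondition X δ) (hg : Isometry g)
    (x : X) (n : ℕ) :
    dist (g^[n + 1] x) x + dist (g^[2] x) x ≤ dist (g x) x + dist (g^[n] x) x + 2 * δ ∨
      dist (g^[n + 1] x) x + dist (g^[2] x) x ≤ dist (g x) x + dist (g^[n + 2] x) x + 2 * δ := by
  have key := h.le_or_le (g x) (g^[n + 2] x) x (g^[2] x)
  simpa only [iterate_succ_apply', iterate_zero_apply, hg.dist_eq, dist_comm, add_comm] using key

theorem FourPointCondition.le_dist_iterate_succ_sub (h : FourPointCondition X δ) (hg : Isometry g)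
    (x : X) (hbig : 2 * δ < dist (g^[2] x) x - dist (g x) x) :
    ∀ n, dist (g^[2] x) x - dist (g x) x - 2 * δ ≤ dist (g^[n + 1] x) x - dist (g^[n] x) x
  | 0 => by
    have := dist_triangle (g (g x)) (g x) x
    rw [hg.dist_eq] at this
    simp only [iterate_succ_apply', iterate_zero_apply, dist_self, sub_zero] at this ⊢
    linarith [h.nonneg x]
  | n + 1 => by
    have ih := h.le_dist_iterate_succ_sub hg x hbig n
    rcases h.dist_iterate_le_or_le hg x n with key | key <;> linarith

theorem FourPointCondition.mul_le_dist_iterate (h : FourPointCondition X δ) (hg : Isometry g)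
    (x : X) (hbig : 2 * δ < dist (g^[2] x) x - dist (g x) x) :
    ∀ n : ℕ, n * (dist (g^[2] x) x - dist (g x) x - 2 * δ) ≤ dist (g^[n] x) x
  | 0 => by simp
  | n + 1 => by
    push_cast
    linarith [h.le_dist_iterate_succ_sub hg x hbig n, h.mul_le_dist_iterate hg x hbig n]

theorem FourPointCondition.sub_le_stableLen (h : FourPointCondition X δ) (hg : Isometry g)
    (x : X) : dist (g^[2] x) x - dist (g x) x - 2 * δ ≤ stableLen g x := by
  rcases le_or_gt (dist (g^[2] x) x - dist (g x) x) (2 * δ) with hsmall | hbig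
  · linarith [stableLen_nonneg g x]
  · exact le_stableLen fun n => by exact_mod_cast h.mul_le_dist_iterate hg x hbig (n + 1)

end Orbit

section Composition

variable {X : Type*} [MetricSpace X] {δ : ℝ} {a b : X → X}

theorem FourPointCondition.dist_comp_le_of_le_dist_swap (h : FourPointCondition X δ)
    (ha : Isometry a) (hb : Isometry b) (x : X)
    (hab : dist (b (a x)) x ≤ dist (a (b x)) x + 4 * δ) :
    dist (b (a x)) x ≤ max (dist (a x) x) (dist (b x) x) + 4 * δ ∨
      2 * dist (b (a x)) x ≤ dist (a x) x + dist (b x) x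
        + (dist (b (a (b (a x)))) x - dist (b (a x)) x) + 8 * δ := by
  refine or_iff_not_imp_left.2 fun hbig => ?_
  rw [not_le, ← max_add_add_right, max_lt_iff] at hbig
  have h1 := h.le_or_le (b x) (b (a (b x))) (b (a x)) x
  have h2 := h.le_or_le x (b (a (b x))) (b (a x)) (b (a (b (a x))))
  simp only [hb.dist_eq, ha.dist_eq, dist_comm x] at h1 h2
  rcases h1 with h1 | h1 <;> rcases h2 with h2 | h2 <;> linarith [h.nonneg x]

theorem FourPointCondition.dist_comp_le_of_dist_swap_lt (h : FourPointCondition X δ)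
    (ha : Isometry a) (hb : Isometry b) (ha' : Surjective a) (hb' : Surjective b) (x : X)
    (hab : dist (a (b x)) x + 4 * δ < dist (b (a x)) x) :
    dist (b (a x)) x ≤ dist (b x) x + (dist (a (a x)) x - dist (a x) x) + 2 * δ ∨
      dist (b (a x)) x ≤ dist (a x) x + (dist (b (b x)) x - dist (b x) x) + 4 * δ := by
  obtain ⟨y, hy⟩ := ha' x
  obtain ⟨z, hz⟩ := hb' x
  have h3 := h.le_or_le (a x) z x y
  have h4 := h.le_or_le y z x (b x)
  rw [← hb.dist_eq (a x), hz, ← ha.dist_eq x y, ← ha.dist_eq (a x) y, ← hb.dist_eq z x, hy,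
    hz] at h3
  rw [← ha.dist_eq y x, ← hb.dist_eq z (b x), ← ha.dist_eq y (b x), ← hb.dist_eq z x, hy,
    hz] at h4
  simp only [dist_comm x, dist_comm z y] at h3 h4
  rcases h3 with h3 | h3
  · rcases h4 with h4 | h4
    · exact Or.inr (by linarith)
    · linarith
  · exact Or.inl (by linarith)

theorem FourPointCondition.dist_comp_le (h : FourPointCondition X δ) (ha : Isometry a)
    (hb : Isometry b) (ha' : Surjective a) (hb' : Surjective b) (x : X) :
    dist (b (a x)) x ≤ max (dist (a x) x) (dist (b x) x)
      + max (stableLen (b ∘ a) x / 2) (max (stableLen a x) (stableLen b x)) + 6 * δ := by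
  have hℓa := h.sub_le_stableLen ha x
  have hℓb := h.sub_le_stableLen hb x
  have hℓba := h.sub_le_stableLen (hb.comp ha) x
  simp only [iterate_succ_apply', iterate_zero_apply, comp_apply] at hℓa hℓb hℓba
  have hMa := le_max_left (dist (a x) x) (dist (b x) x)
  have hMb := le_max_right (dist (a x) x) (dist (b x) x)
  have hLba := le_max_left (stableLen (b ∘ a) x / 2) (max (stableLen a x) (stableLen b x))
  have hLab := le_max_right (stableLen (b ∘ a) x / 2) (max (stableLen a x) (stableLen b x))
  have hLa := le_max_left (stableLen a x) (stableLen b x)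
  have hLb := le_max_right (stableLen a x) (stableLen b x)
  have hδ := h.nonneg x
  have ha₀ := stableLen_nonneg a x
  rcases le_or_gt (dist (b (a x)) x) (dist (a (b x)) x + 4 * δ) with hab | hab
  · rcases h.dist_comp_le_of_le_dist_swap ha hb x hab with h' | h' <;> linarith
  · rcases h.dist_comp_le_of_dist_swap_lt ha hb ha' hb' x hab with h' | h' <;> linarith

end Composition

section PowSet

variable {X : Type*} {S : Set (X → X)}

theorem foldr_comp_append (l₁ l₂ : List (X → X)) :
    (l₁ ++ l₂).foldr (· ∘ ·) id = l₁.foldr (· ∘ ·) id ∘ l₂.foldr (· ∘ ·) id := by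
  induction l₁ with
  | nil => rfl
  | cons f l ih => simp only [List.cons_append, List.foldr_cons, ih]; rfl

theorem powSet_zero : powSet S 0 = {id} := by
  ext g
  simp [powSet, List.length_eq_zero_iff]

theorem powSet_one : powSet S 1 = S := by
  ext g
  simp [powSet, List.length_eq_one_iff]

theorem mem_powSet_add {g : X → X} {m n : ℕ} :
    g ∈ powSet S (m + n) ↔ ∃ f ∈ powSet S m, ∃ h ∈ powSet S n, g = f ∘ h := by
  constructor
  · rintro ⟨l, hl, hS, rfl⟩
    refine ⟨_, ⟨l.take m, by simp [hl], fun f hf => hS f (List.mem_of_mem_take hf), rfl⟩,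
      _, ⟨l.drop m, by simp [hl], fun f hf => hS f (List.mem_of_mem_drop hf), rfl⟩, ?_⟩
    rw [← foldr_comp_append, List.take_append_drop]
  · rintro ⟨_, ⟨l₁, rfl, hS₁, rfl⟩, _, ⟨l₂, rfl, hS₂, rfl⟩, rfl⟩
    refine ⟨l₁ ++ l₂, List.length_append, fun f hf => ?_, (foldr_comp_append l₁ l₂).symm⟩
    exact (List.mem_append.1 hf).elim (hS₁ f) (hS₂ f)

end PowSet

section Displacement

variable {X : Type*} [MetricSpace X] {x : X}

theorem Isometry.dist_apply_apply_le {f : X → X} (hf : Isometry f) (g : X → X) (x : X) :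
    dist (f (g x)) x ≤ dist (f x) x + dist (g x) x := by
  simpa only [hf.dist_eq, add_comm] using dist_triangle (f (g x)) (f x) x

theorem dispSup_nonneg (T : Set (X → X)) : 0 ≤ dispSup x T :=
  Real.sSup_nonneg <| by rintro _ ⟨f, -, rfl⟩; exact dist_nonneg

theorem dInfty_nonneg (T : Set (X → X)) : 0 ≤ dInfty T x :=
  Real.sSup_nonneg <| by rintro _ ⟨f, -, rfl⟩; exact stableLen_nonneg f x

theorem dispSup_le {T : Set (X → X)} {c : ℝ} (h : ∀ f ∈ T, dist (f x) x ≤ c) (hc : 0 ≤ c) :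
    dispSup x T ≤ c :=
  Real.sSup_le (Set.forall_mem_image.2 h) hc

variable {T : Set (X → X)} (hT : BddAbove ((fun f => dist (f x) x) '' T))
include hT

theorem dist_le_dispSup {f : X → X} (hf : f ∈ T) : dist (f x) x ≤ dispSup x T :=
  le_csSup hT ⟨f, hf, rfl⟩

theorem stableLen_le_dInfty {f : X → X} (hf : f ∈ T) : stableLen f x ≤ dInfty T x := by
  refine le_csSup ?_ ⟨f, hf, rfl⟩
  obtain ⟨c, hc⟩ := hT
  exact ⟨c, by rintro _ ⟨g, hg, rfl⟩; exact (stableLen_le_dist g x).trans (hc ⟨g, hg, rfl⟩)⟩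

theorem dInfty_le_dispSup : dInfty T x ≤ dispSup x T :=
  Real.sSup_le (Set.forall_mem_image.2 fun f hf =>
    (stableLen_le_dist f x).trans (dist_le_dispSup hT hf)) (dispSup_nonneg T)

end Displacement

section Semigroup

variable {X : Type*} [MetricSpace X] {S : Set (X → X)} {x : X} {C : ℝ}
  (hS : ∀ f ∈ S, Isometry f ∧ Surjective f)
include hS

theorem isometry_surjective_of_mem_powSet :
    ∀ {n : ℕ} {g : X → X}, g ∈ powSet S n → Isometry g ∧ Surjective g
  | 0, g, hg => by
    rw [powSet_zero, Set.mem_singleton_iff] at hg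
    exact hg ▸ ⟨isometry_id, surjective_id⟩
  | n + 1, _, hg => by
    obtain ⟨f, hf, s, hs, rfl⟩ := mem_powSet_add.1 hg
    rw [powSet_one] at hs
    obtain ⟨hfi, hfs⟩ := isometry_surjective_of_mem_powSet hf
    exact ⟨hfi.comp (hS s hs).1, hfs.comp (hS s hs).2⟩

variable (hC : ∀ f ∈ S, dist (f x) x ≤ C)
include hC

theorem dist_le_of_mem_powSet : ∀ {n : ℕ} {g : X → X}, g ∈ powSet S n → dist (g x) x ≤ n * C
  | 0, g, hg => by
    rw [powSet_zero, Set.mem_singleton_iff] at hg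
    simp [hg]
  | n + 1, _, hg => by
    obtain ⟨f, hf, s, hs, rfl⟩ := mem_powSet_add.1 hg
    rw [powSet_one] at hs
    have := (isometry_surjective_of_mem_powSet hS hf).1.dist_apply_apply_le s x
    rw [comp_apply, Nat.cast_succ]
    linarith [dist_le_of_mem_powSet hf, hC s hs]

theorem bddAbove_dist_powSet (n : ℕ) : BddAbove ((fun f => dist (f x) x) '' powSet S n) :=
  ⟨n * C, by rintro _ ⟨f, hf, rfl⟩; exact dist_le_of_mem_powSet hS hC hf⟩

theorem subadditive_dispSup_powSet : Subadditive fun n => dispSup x (powSet S n) := by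
  intro m n
  refine dispSup_le (fun g hg => ?_) (add_nonneg (dispSup_nonneg _) (dispSup_nonneg _))
  obtain ⟨f, hf, h, hh, rfl⟩ := mem_powSet_add.1 hg
  exact ((isometry_surjective_of_mem_powSet hS hf).1.dist_apply_apply_le h x).trans
    (add_le_add (dist_le_dispSup (bddAbove_dist_powSet hS hC m) hf)
      (dist_le_dispSup (bddAbove_dist_powSet hS hC n) hh))

theorem FourPointCondition.dispSup_powSet_two_mul_le {δ : ℝ} (h : FourPointCondition X δ)
    (n : ℕ) : dispSup x (powSet S (2 * n)) ≤
      dispSup x (powSet S n) + dInfty (powSet S (2 * n)) x / 2 + 6 * δ := by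
  have hbdd := bddAbove_dist_powSet hS hC
  have hc : 0 ≤ dispSup x (powSet S n) + dInfty (powSet S (2 * n)) x / 2 + 6 * δ := by
    linarith [dispSup_nonneg (x := x) (powSet S n), dInfty_nonneg (x := x) (powSet S (2 * n)),
      h.nonneg x]
  refine dispSup_le (fun g hg => ?_) hc
  rw [two_mul] at hg ⊢
  obtain ⟨b, hb, a, ha, rfl⟩ := mem_powSet_add.1 hg
  obtain ⟨hai, has⟩ := isometry_surjective_of_mem_powSet hS ha
  obtain ⟨hbi, hbs⟩ := isometry_surjective_of_mem_powSet hS hb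
  have hM : max (dist (a x) x) (dist (b x) x) ≤ dispSup x (powSet S n) :=
    max_le (dist_le_dispSup (hbdd n) ha) (dist_le_dispSup (hbdd n) hb)
  have hL : max (stableLen (b ∘ a) x / 2) (max (stableLen a x) (stableLen b x)) ≤
      dInfty (powSet S (n + n)) x / 2 := by
    have hsq : ∀ f ∈ powSet S n, stableLen f x ≤ dInfty (powSet S (n + n)) x / 2 := fun f hf =>
      by linarith [two_mul_stableLen_le f x,
        stableLen_le_dInfty (hbdd (n + n)) (mem_powSet_add.2 ⟨f, hf, f, hf, rfl⟩)]
    refine max_le ?_ (max_le (hsq a ha) (hsq b hb))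
    linarith [stableLen_le_dInfty (hbdd (n + n)) (mem_powSet_add.2 ⟨b, hb, a, ha, rfl⟩)]
  rw [comp_apply]
  linarith [h.dist_comp_le hai hbi has hbs x]

end Semigroup

section Sequences

variable {u v : ℕ → ℝ} {D : ℝ}

theorem Subadditive.le_div_of_tendsto (hu : Subadditive u) (hu₀ : ∀ n, 0 ≤ u n)
    (hD : Tendsto (fun n => u n / n) atTop (𝓝 D)) {n : ℕ} (hn : n ≠ 0) : D ≤ u n / n := by
  have hbdd : BddBelow (Set.range fun n => u n / n) :=
    ⟨0, by rintro _ ⟨k, rfl⟩; exact div_nonneg (hu₀ k) k.cast_nonneg⟩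
  rw [tendsto_nhds_unique hD (hu.tendsto_lim hbdd)]
  exact hu.lim_le_div hbdd hn

theorem tendsto_two_mul_atTop : Tendsto (fun n : ℕ => 2 * n) atTop atTop :=
  tendsto_id.const_mul_atTop' two_pos

theorem Subadditive.tendsto_div_two_mul {c : ℝ} (hu : Subadditive u) (hu₀ : ∀ n, 0 ≤ u n)
    (hD : Tendsto (fun n => u n / n) atTop (𝓝 D)) (hvu : ∀ n, v n ≤ u n)
    (hkey : ∀ n, u (2 * n) ≤ u n + v (2 * n) / 2 + c) :
    Tendsto (fun n : ℕ => v (2 * n) / (2 * n)) atTop (𝓝 D) := by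
  have hupper : Tendsto (fun n : ℕ => u (2 * n) / (2 * n)) atTop (𝓝 D) := by
    simpa [comp_def] using hD.comp tendsto_two_mul_atTop
  have hlower : Tendsto (fun n : ℕ => 2 * D - u n / n - c / n) atTop (𝓝 D) := by
    convert (tendsto_const_nhds.sub hD).sub (tendsto_const_div_atTop_nhds_zero_nat c) using 2
    ring
  refine tendsto_of_tendsto_of_tendsto_of_le_of_le' hlower hupper ?_
    (Eventually.of_forall fun n => div_le_div_of_nonneg_right (hvu _) (by positivity))
  filter_upwards [eventually_ne_atTop 0] with n hn
  have hn' : (0 : ℝ) < n := by positivity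
  have h2n := hu.le_div_of_tendsto hu₀ hD (n := 2 * n) (by omega)
  rw [Nat.cast_mul, Nat.cast_two, le_div_iff₀ (by positivity)] at h2n
  have e : (2 * D - u n / n - c / n) * (2 * n) = 2 * (D * (2 * n) - u n - c) := by
    field_simp
  rw [le_div_iff₀ (by positivity), e]
  linarith [hkey n]

theorem limsup_div_eq_of_tendsto_div_two_mul (hv₀ : ∀ n, 0 ≤ v n) (hvu : ∀ n, v n ≤ u n)
    (hD : Tendsto (fun n => u n / n) atTop (𝓝 D))
    (hv : Tendsto (fun n : ℕ => v (2 * n) / (2 * n)) atTop (𝓝 D)) :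
    limsup (fun n : ℕ => v n / n) atTop = D := by
  have hle : (fun n : ℕ => v n / n) ≤ fun n => u n / n := fun n =>
    div_le_div_of_nonneg_right (hvu n) n.cast_nonneg
  have hcobdd (l : Filter ℕ) [l.NeBot] : IsCoboundedUnder (· ≤ ·) l (fun n : ℕ => v n / n) :=
    (isBoundedUnder_of_eventually_ge (a := 0)
      (Eventually.of_forall fun n => div_nonneg (hv₀ n) n.cast_nonneg)).isCoboundedUnder_le
  have hbdd : IsBoundedUnder (· ≤ ·) atTop (fun n : ℕ => v n / n) :=
    hD.isBoundedUnder_le.mono_le (Eventually.of_forall hle)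
  refine le_antisymm ?_ ?_
  · exact hD.limsup_eq ▸ limsup_le_limsup (Eventually.of_forall hle) (hcobdd _) hD.isBoundedUnder_le
  · rw [← hv.limsup_eq]
    convert tendsto_two_mul_atTop.limsup_comp_le_limsup (hcobdd _) hbdd
    simp

end Sequences

theorem stmt9_general {X : Type*} [MetricSpace X] (δ : ℝ)
    (hfpc : ∀ x y s t : X, dist x y + dist s t ≤
      max (dist x s + dist y t) (dist x t + dist y s) + 2 * δ)
    (S : Set (X → X)) (hS : ∀ f ∈ S, Isometry f ∧ Function.Surjective f)
    (x : X) (hb : ∃ C : ℝ, ∀ f ∈ S, dist (f x) x ≤ C)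
    (D : ℝ)
    (hD : Tendsto (fun n : ℕ => dispSup x (powSet S n) / n) atTop (nhds D)) :
    D = Filter.limsup (fun n : ℕ => dInfty (powSet S n) x / n) atTop ∧
    Tendsto (fun n : ℕ => dInfty (powSet S (2 * n)) x / (2 * n)) atTop (nhds D) := by
  obtain ⟨C, hC⟩ := hb
  have hvu (n : ℕ) : dInfty (powSet S n) x ≤ dispSup x (powSet S n) :=
    dInfty_le_dispSup (bddAbove_dist_powSet hS hC n)
  have heven := (subadditive_dispSup_powSet hS hC).tendsto_div_two_mul
    (fun _ => dispSup_nonneg _) hD hvu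
    (FourPointCondition.dispSup_powSet_two_mul_le hS hC hfpc)
  exact ⟨(limsup_div_eq_of_tendsto_div_two_mul (fun _ => dInfty_nonneg _) hvu hD heven).symm,
    heven⟩

/-- **Berger–Wang for isometries.** For a bounded set `Σ` of
isometries of a `δ`-hyperbolic metric space,
`D(Σ) = limsup_n d∞(Σⁿ)/n = lim_n d∞(Σ^{2n})/(2n)`. -/
theorem stmt9 {X : Type*} [MetricSpace X] (δ : ℝ) (hδ : 0 ≤ δ)
    (hfpc : ∀ x y s t : X, dist x y + dist s t ≤
      max (dist x s + dist y t) (dist x t + dist y s) + 2 * δ)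
    (S : Set (X → X)) (hS : ∀ f ∈ S, Isometry f ∧ Function.Surjective f)
    (x : X) (hb : ∃ C : ℝ, ∀ f ∈ S, dist (f x) x ≤ C)
    (D : ℝ)
    (hD : Tendsto (fun n : ℕ => dispSup x (powSet S n) / n) atTop (nhds D)) :
    D = Filter.limsup (fun n : ℕ => dInfty (powSet S n) x / n) atTop ∧
    Tendsto (fun n : ℕ => dInfty (powSet S (2 * n)) x / (2 * n)) atTop (nhds D) :=
  stmt9_general δ hfpc S hS x hb D hD
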